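/- Let p be an odd prime and ℓ = (p−1)/2. For every real N > 1 and all reals 1 ≤ R_1 ≤ R_2 ≤ ⋯ ≤ R_{ℓ+1}, the Lebesgue measure of the region {x ∈ ℝ_{>0}^{p−1} : R_1 ≤ x_1 < x_2 < ⋯ < x_ℓ ≤ R_{ℓ+1}; x_i > R_i for each 1 ≤ i ≤ ℓ; and 1 < x_1·x_2⋯x_k < N for every k with ℓ+1 ≤ k ≤ p−1} equals (N−1)·(log N)^{ℓ−1} · μ_I(W(R_1,…,R_{ℓ+1})), where μ_I(W(R_1,…,R_{ℓ+1})) = ∫_{W} ∏_{i=1}^{ℓ} dx_i/x_i and W(R_1,…,R_{ℓ+1}) = {x ∈ ℝ^ℓ : R_1 ≤ x_1 < ⋯ < x_ℓ ≤ R_{ℓ+1}, x_i > R_i for each i}. -/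

import Mathlib

open MeasureTheory Finset

/-- The region `W(R_1, …, R_{ℓ+1}) = {y ∈ ℝ^ℓ : R_1 ≤ y_1 < ⋯ < y_ℓ ≤ R_{ℓ+1}, y_i > R_i}`
(coordinates 0-indexed, the bounds `R` 1-indexed). -/
def shapeRegion (ℓ : ℕ) (R : ℕ → ℝ) : Set (Fin ℓ → ℝ) :=
  {y | (∀ i j : Fin ℓ, i < j → y i < y j) ∧
    ∀ i : Fin ℓ, R ((i : ℕ) + 1) < y i ∧ y i ≤ R (ℓ + 1)}

/-- The region of `x ∈ ℝ_{>0}^{p−1}` with `R_1 ≤ x_1 < ⋯ < x_ℓ ≤ R_{ℓ+1}`, `x_i > R_i` for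
`1 ≤ i ≤ ℓ`, and `1 < x_1⋯x_k < N` for every `ℓ+1 ≤ k ≤ p−1` (coordinates 0-indexed). -/
def tupleRegion (p : ℕ) (N : ℝ) (R : ℕ → ℝ) : Set (Fin (p - 1) → ℝ) :=
  {x | (∀ i, 0 < x i) ∧
    (∀ i j : Fin (p - 1), (j : ℕ) < (p - 1) / 2 → i < j → x i < x j) ∧
    (∀ i : Fin (p - 1), (i : ℕ) < (p - 1) / 2 →
      R ((i : ℕ) + 1) < x i ∧ x i ≤ R ((p - 1) / 2 + 1)) ∧
    (∀ k : ℕ, (p - 1) / 2 + 1 ≤ k → k ≤ p - 1 →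
      1 < ∏ j ∈ Finset.univ.filter (fun j : Fin (p - 1) => (j : ℕ) < k), x j ∧
        ∏ j ∈ Finset.univ.filter (fun j : Fin (p - 1) => (j : ℕ) < k), x j < N)}

/-!
Write `x = (y, z)` with `y, z ∈ ℝ^ℓ` the first and last `ℓ` coordinates. The shape conditions
say exactly `y ∈ W` (positivity of `y` is automatic, as `y` increases from `y₁ > R₁ ≥ 1`); the
remaining conditions say that `z` is positive and that its partial products, scaled by
`c = ∏ yᵢ`, lie in `(1, N)`. Peeling off the first coordinate `a ∈ (1/c, N/c)` of `z` replaces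
`c` by `c a`, so by induction on the length these fibres have volume `(N - 1) (log N)^(ℓ-1) / c`,
one factor `log N = ∫ da/a` per step after the first. Fubini then turns the volume into
`(N - 1) (log N)^(ℓ-1) ∫_W ∏ dyᵢ/yᵢ`.
-/

lemma MeasureTheory.Measure.prod_setOf_mem_and_mem {α β : Type*} [MeasurableSpace α]
    [MeasurableSpace β] (μ : Measure α) (ν : Measure β) [SFinite ν] {A : Set α}
    {F : α → Set β} (hA : MeasurableSet A) (hF : MeasurableSet {q : α × β | q.2 ∈ F q.1}) :
    μ.prod ν {q | q.1 ∈ A ∧ q.2 ∈ F q.1} = ∫⁻ a in A, ν (F a) ∂μ := by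
  have hS : MeasurableSet {q : α × β | q.1 ∈ A ∧ q.2 ∈ F q.1} := (measurable_fst hA).inter hF
  rw [Measure.prod_apply hS, ← lintegral_indicator hA]
  congr 1 with a
  by_cases ha : a ∈ A <;> simp [ha, Set.preimage]

lemma lintegral_Ioo_ofReal_inv {a b : ℝ} (ha : 0 < a) (hab : a ≤ b) :
    ∫⁻ x in Set.Ioo a b, ENNReal.ofReal x⁻¹ = ENNReal.ofReal (Real.log (b / a)) := by
  have hint : IntegrableOn (fun x : ℝ => x⁻¹) (Set.Ioo a b) :=
    ((continuousOn_inv₀.mono fun x hx => (ha.trans_le hx.1).ne').integrableOn_Icc).mono_set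
      Set.Ioo_subset_Icc_self
  rw [← ofReal_integral_eq_lintegral_ofReal hint
    ((ae_restrict_iff' measurableSet_Ioo).2 (ae_of_all _ fun x hx => inv_nonneg.2
      (ha.trans hx.1).le)), ← integral_Ioc_eq_integral_Ioo,
    ← intervalIntegral.integral_of_le hab, integral_inv_of_pos ha (ha.trans_le hab)]

def MeasurableEquiv.piFinAppend (α : Type*) [MeasurableSpace α] {n a b : ℕ} (h : n = a + b) :
    (Fin a → α) × (Fin b → α) ≃ᵐ (Fin n → α) :=
  (MeasurableEquiv.sumPiEquivProdPi fun _ : Fin a ⊕ Fin b => α).symm.trans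
    (MeasurableEquiv.piCongrLeft (fun _ => α) (finSumFinEquiv.trans (finCongr h.symm)))

lemma MeasurableEquiv.piFinAppend_apply (α : Type*) [MeasurableSpace α] {n a b : ℕ}
    (h : n = a + b) (y : Fin a → α) (z : Fin b → α) :
    piFinAppend α h (y, z) = fun i => Fin.append y z (Fin.cast h i) := by
  subst h
  ext i
  refine Fin.addCases (fun j => ?_) (fun j => ?_) i <;>
    simp only [Fin.cast_eq_self, Fin.append_left, Fin.append_right] <;>
    simp [piFinAppend, sumPiEquivProdPi, coe_piCongrLeft, ← finSumFinEquiv_apply_left,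
      ← finSumFinEquiv_apply_right, Equiv.piCongrLeft_apply_apply]

lemma MeasureTheory.volume_measurePreserving_piFinAppend (α : Type*) [MeasureSpace α]
    [SigmaFinite (volume : Measure α)] {n a b : ℕ} (h : n = a + b) :
    MeasurePreserving (MeasurableEquiv.piFinAppend α h) volume volume :=
  (volume_measurePreserving_sumPiEquivProdPi _).symm.trans
    (volume_measurePreserving_piCongrLeft _ _)

lemma forall_add_le_le_iff {P : ℕ → Prop} (a b c : ℕ) :
    (∀ k, a + b ≤ k → k ≤ a + c → P k) ↔ ∀ m, b ≤ m → m ≤ c → P (a + m) :=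
  ⟨fun h m hb hc => h _ (by omega) (by omega), fun h k hb hc => by
    obtain ⟨m, rfl⟩ := Nat.exists_eq_add_of_le (le_of_add_le_left hb)
    exact h m (by omega) (by omega)⟩

def partialProd {n : ℕ} (z : Fin n → ℝ) (k : ℕ) : ℝ :=
  ∏ j ∈ univ.filter (fun j : Fin n => (j : ℕ) < k), z j

@[simp] lemma partialProd_zero {n : ℕ} (z : Fin n → ℝ) : partialProd z 0 = 1 := by
  simp [partialProd]

lemma partialProd_cons {n : ℕ} (a : ℝ) (z : Fin n → ℝ) (k : ℕ) :
    partialProd (Fin.cons a z) (k + 1) = a * partialProd z k := by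
  simp [partialProd, prod_filter, Fin.prod_univ_succ]

lemma partialProd_append {a b : ℕ} (y : Fin a → ℝ) (z : Fin b → ℝ) (k : ℕ) :
    partialProd (Fin.append y z) (a + k) = (∏ i, y i) * partialProd z k := by
  simp only [partialProd, prod_filter, Fin.prod_univ_add, Fin.append_left, Fin.append_right,
    Fin.val_castAdd, Fin.val_natAdd, Nat.add_lt_add_iff_left]
  congr 1
  exact prod_congr rfl fun i _ => if_pos (by omega)

@[fun_prop]
lemma measurable_partialProd {n : ℕ} (k : ℕ) : Measurable fun z : Fin n → ℝ => partialProd z k :=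
  Finset.measurable_prod _ fun j _ => measurable_pi_apply j

def partialProdRegion (N c : ℝ) (n : ℕ) : Set (Fin n → ℝ) :=
  {z | (∀ i, 0 < z i) ∧ ∀ k, 1 ≤ k → k ≤ n → c * partialProd z k ∈ Set.Ioo 1 N}

lemma measurableSet_partialProdRegion_param (N : ℝ) (n : ℕ) :
    MeasurableSet {q : ℝ × (Fin n → ℝ) | q.2 ∈ partialProdRegion N q.1 n} := by
  simp only [partialProdRegion, Set.mem_ofPred_eq, Set.mem_Ioo, measurableSet_setOfPred]
  fun_prop

lemma cons_mem_partialProdRegion_iff {N c a : ℝ} {n : ℕ} (hc : 0 < c) (z : Fin n → ℝ) :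
    Fin.cons a z ∈ partialProdRegion N c (n + 1) ↔
      a ∈ Set.Ioo (1 / c) (N / c) ∧ z ∈ partialProdRegion N (c * a) n := by
  have hIoo : a ∈ Set.Ioo (1 / c) (N / c) ↔ c * a ∈ Set.Ioo 1 N := by
    simp only [Set.mem_Ioo, div_lt_iff₀' hc, lt_div_iff₀' hc]
  simp only [partialProdRegion, Set.mem_ofPred_eq, Fin.forall_fin_succ, Fin.cons_zero,
    Fin.cons_succ, hIoo]
  constructor
  · rintro ⟨⟨-, hz⟩, hk⟩
    refine ⟨by simpa [partialProd_cons] using hk (0 + 1) le_rfl (by omega), hz,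
      fun k hk1 hkn => ?_⟩
    simpa [partialProd_cons, mul_assoc] using hk (k + 1) (by omega) (by omega)
  · rintro ⟨ha, hz, hk⟩
    refine ⟨⟨pos_of_mul_pos_right (one_pos.trans ha.1) hc.le, hz⟩, fun k hk1 hkn => ?_⟩
    obtain ⟨k, rfl⟩ := Nat.exists_eq_add_of_le' hk1
    rcases k.eq_zero_or_pos with rfl | hk0
    · simpa [partialProd_cons] using ha
    · simpa [partialProd_cons, mul_assoc] using hk k hk0 (by omega)

lemma partialProdRegion_zero (N c : ℝ) : partialProdRegion N c 0 = Set.univ := by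
  ext z
  simp only [partialProdRegion, Set.mem_ofPred_eq, Set.mem_univ, iff_true]
  exact ⟨finZeroElim, fun k hk1 hk0 => absurd hk1 (by omega)⟩

lemma volume_partialProdRegion_succ {N c : ℝ} (hc : 0 < c) (n : ℕ) :
    volume (partialProdRegion N c (n + 1)) =
      ∫⁻ a in Set.Ioo (1 / c) (N / c), volume (partialProdRegion N (c * a) n) := by
  have he := (volume_preserving_piFinSuccAbove (fun _ : Fin (n + 1) => ℝ) 0).symm
  have hF : MeasurableSet {q : ℝ × (Fin n → ℝ) | q.2 ∈ partialProdRegion N (c * q.1) n} :=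
    measurableSet_partialProdRegion_param N n |>.preimage (by fun_prop :
      Measurable fun q : ℝ × (Fin n → ℝ) => (c * q.1, q.2))
  rw [← he.measure_preimage_equiv, ← Measure.prod_setOf_mem_and_mem _ _ measurableSet_Ioo hF]
  congr 1 with ⟨a, z⟩
  change Fin.insertNth (α := fun _ => ℝ) 0 a z ∈ partialProdRegion N c (n + 1) ↔ _
  rw [Fin.insertNth_zero']
  exact cons_mem_partialProdRegion_iff hc z

theorem volume_partialProdRegion {N : ℝ} (hN : 1 ≤ N) (n : ℕ) {c : ℝ} (hc : 0 < c) :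
    volume (partialProdRegion N c (n + 1)) =
      ENNReal.ofReal ((N - 1) * Real.log N ^ n / c) := by
  induction n generalizing c with
  | zero =>
    rw [volume_partialProdRegion_succ hc]
    simp only [partialProdRegion_zero, volume_pi, Measure.pi_univ, Finset.univ_eq_empty,
      prod_empty, setLIntegral_one, Real.volume_Ioo]
    congr 1
    field_simp
  | succ n ih =>
    have hIoo : ∀ a ∈ Set.Ioo (1 / c) (N / c), volume (partialProdRegion N (c * a) (n + 1)) =
        ENNReal.ofReal ((N - 1) * Real.log N ^ n / c) * ENNReal.ofReal a⁻¹ := by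
      intro a ha
      have ha0 : 0 < a := (one_div_pos.2 hc).trans ha.1
      rw [ih (mul_pos hc ha0), ← ENNReal.ofReal_mul (by have := Real.log_nonneg hN; positivity)]
      congr 1
      field_simp
    rw [volume_partialProdRegion_succ hc, setLIntegral_congr_fun measurableSet_Ioo hIoo,
      lintegral_const_mul' _ _ ENNReal.ofReal_ne_top,
      lintegral_Ioo_ofReal_inv (one_div_pos.2 hc) (div_le_div_of_nonneg_right hN hc.le),
      ← ENNReal.ofReal_mul (by have := Real.log_nonneg hN; positivity)]
    congr 1
    field_simp
    ring

lemma measurableSet_shapeRegion (ℓ : ℕ) (R : ℕ → ℝ) : MeasurableSet (shapeRegion ℓ R) := by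
  simp only [shapeRegion, measurableSet_setOfPred]
  fun_prop

lemma one_lt_of_mem_shapeRegion {ℓ : ℕ} {R : ℕ → ℝ} (hR1 : 1 ≤ R 1) {y : Fin ℓ → ℝ}
    (hy : y ∈ shapeRegion ℓ R) (i : Fin ℓ) : 1 < y i := by
  have h0 : 1 < y ⟨0, i.pos⟩ := hR1.trans_lt (hy.2 ⟨0, i.pos⟩).1
  rcases (Nat.zero_le (i : ℕ)).eq_or_lt with hi | hi
  · rwa [show i = ⟨0, i.pos⟩ from Fin.ext hi.symm]
  · exact h0.trans (hy.1 _ _ hi)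

lemma integrableOn_prod_inv_shapeRegion {ℓ : ℕ} {R : ℕ → ℝ} (hR1 : 1 ≤ R 1) :
    IntegrableOn (fun y : Fin ℓ → ℝ => ∏ i, (y i)⁻¹) (shapeRegion ℓ R) := by
  have hsub : shapeRegion ℓ R ⊆ Set.Icc (fun _ => 1) (fun _ => R (ℓ + 1)) := fun y hy =>
    ⟨fun i => (one_lt_of_mem_shapeRegion hR1 hy i).le, fun i => (hy.2 i).2⟩
  have hcont : ContinuousOn (fun y : Fin ℓ → ℝ => ∏ i, (y i)⁻¹)
      (Set.Icc (fun _ => 1) (fun _ => R (ℓ + 1))) :=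
    continuousOn_finsetProd _ fun i _ =>
      (continuous_apply i).continuousOn.inv₀ fun y hy => (one_pos.trans_le (hy.1 i)).ne'
  exact (hcont.integrableOn_compact isCompact_Icc).mono_set hsub

lemma append_mem_tupleRegion_iff {p ℓ : ℕ} {N : ℝ} {R : ℕ → ℝ} (hR1 : 1 ≤ R 1)
    (h : p - 1 = ℓ + ℓ) (y z : Fin ℓ → ℝ) :
    MeasurableEquiv.piFinAppend ℝ h (y, z) ∈ tupleRegion p N R ↔
      y ∈ shapeRegion ℓ R ∧ z ∈ partialProdRegion N (∏ i, y i) ℓ := by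
  have hℓ : (p - 1) / 2 = ℓ := by omega
  rw [MeasurableEquiv.piFinAppend_apply]
  simp only [tupleRegion, shapeRegion, partialProdRegion, Set.mem_ofPred_eq, ← partialProd.eq_1,
    hℓ]
  generalize p - 1 = n at h ⊢
  subst h
  simp only [Fin.cast_eq_self, Fin.forall_fin_add, Fin.append_left, Fin.append_right,
    Fin.lt_def, Fin.val_castAdd, Fin.val_natAdd, Fin.is_lt, true_implies, add_lt_iff_neg_left,
    not_lt_zero, false_implies, implies_true, and_true, forall_add_le_le_iff,
    partialProd_append, Set.mem_Ioo]
  have hcross : ∀ j i : Fin ℓ, ¬ℓ + (j : ℕ) < i := fun j i => by omega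
  simp only [hcross, false_implies, implies_true, and_true]
  constructor
  · rintro ⟨⟨-, hz⟩, hinc, hbd, hk⟩
    exact ⟨⟨hinc, hbd⟩, hz, hk⟩
  · rintro ⟨hy, hz, hk⟩
    exact ⟨⟨fun i => one_pos.trans (one_lt_of_mem_shapeRegion hR1 hy i), hz⟩, hy.1, hy.2, hk⟩

lemma volume_tupleRegion_eq_lintegral {p ℓ : ℕ} {N : ℝ} {R : ℕ → ℝ} (hR1 : 1 ≤ R 1)
    (h : p - 1 = ℓ + ℓ) :
    volume (tupleRegion p N R) =
      ∫⁻ y in shapeRegion ℓ R, volume (partialProdRegion N (∏ i, y i) ℓ) := by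
  have hF : MeasurableSet
      {q : (Fin ℓ → ℝ) × (Fin ℓ → ℝ) | q.2 ∈ partialProdRegion N (∏ i, q.1 i) ℓ} :=
    (measurableSet_partialProdRegion_param N ℓ).preimage
      (by fun_prop : Measurable fun q : (Fin ℓ → ℝ) × (Fin ℓ → ℝ) => (∏ i, q.1 i, q.2))
  rw [← (volume_measurePreserving_piFinAppend ℝ h).measure_preimage_equiv,
    ← Measure.prod_setOf_mem_and_mem _ _ (measurableSet_shapeRegion ℓ R) hF]
  congr 1 with ⟨y, z⟩
  exact append_mem_tupleRegion_iff hR1 h y z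

theorem volume_tupleRegion_general
    (p : ℕ) (hp : p.Prime) (hodd : Odd p)
    (N : ℝ) (hN : 1 < N) (R : ℕ → ℝ) (hR1 : 1 ≤ R 1) :
    volume (tupleRegion p N R) =
      ENNReal.ofReal ((N - 1) * Real.log N ^ ((p - 1) / 2 - 1) *
        ∫ y in shapeRegion ((p - 1) / 2) R, (∏ i, (y i)⁻¹)) := by
  obtain ⟨m, hm⟩ := hodd
  have hsplit : p - 1 = (p - 1) / 2 + (p - 1) / 2 := by omega
  generalize (p - 1) / 2 = ℓ at hsplit ⊢
  obtain ⟨n, rfl⟩ : ∃ n, ℓ = n + 1 := ⟨ℓ - 1, by have := hp.two_le; omega⟩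
  have hW := measurableSet_shapeRegion (n + 1) R
  have hpos : ∀ y ∈ shapeRegion (n + 1) R, ∀ i, 0 < y i := fun y hy i =>
    one_pos.trans (one_lt_of_mem_shapeRegion hR1 hy i)
  have hK : 0 ≤ (N - 1) * Real.log N ^ n := by have := Real.log_nonneg hN.le; positivity
  rw [volume_tupleRegion_eq_lintegral hR1 hsplit, Nat.add_sub_cancel, ← integral_const_mul,
    ofReal_integral_eq_lintegral_ofReal ((integrableOn_prod_inv_shapeRegion hR1).const_mul _)
      ((ae_restrict_iff' hW).2 (ae_of_all _ fun y hy =>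
        mul_nonneg hK (prod_nonneg fun i _ => (inv_pos.2 (hpos y hy i)).le)))]
  refine setLIntegral_congr_fun hW fun y hy => ?_
  rw [volume_partialProdRegion hN.le n (prod_pos fun i _ => hpos y hy i), prod_inv_distrib,
    div_eq_mul_inv]

/-- The Lebesgue volume of the region of positive `(p−1)`-tuples of bounded partial
products with prescribed shape conditions equals
`(N−1)·(log N)^(ℓ−1)·μ_I(W(R_1,…,R_{ℓ+1}))`, where
`μ_I(W) = ∫_W ∏ dx_i/x_i` and `ℓ = (p−1)/2`. -/
theorem volume_tupleRegion
    (p : ℕ) (hp : p.Prime) (hodd : Odd p)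
    (N : ℝ) (hN : 1 < N) (R : ℕ → ℝ) (hR1 : 1 ≤ R 1)
    (hRmono : ∀ i : ℕ, 1 ≤ i → i ≤ (p - 1) / 2 → R i ≤ R (i + 1)) :
    volume (tupleRegion p N R) =
      ENNReal.ofReal ((N - 1) * Real.log N ^ ((p - 1) / 2 - 1) *
        ∫ y in shapeRegion ((p - 1) / 2) R, (∏ i, (y i)⁻¹)) :=
  volume_tupleRegion_general p hp hodd N hN R hR1
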